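/- Let F := (y³−z³)(x²−yz)³ and G := (x³−z³)(−y²+zx)³ in ℂ[x,y,z]. Then (Ω − Ξ) ∧ (G·dF − F·dG) = 0, i.e. all three coefficient polynomials of this wedge vanish identically. In other words, F/G is a rational first integral of the Lins Neto foliation ℱ_{−1}, which is an elliptic pencil of nonics. -/
import Mathlib

open MvPolynomial

noncomputable section

/-- τ = e^{2πi/3}, a primitive cube root of unity. -/
def τ : ℂ := Complex.exp (2 * Real.pi * Complex.I / 3)

/-- The polynomial ring ℂ[x,y,z]. -/
abbrev R3 : Type := MvPolynomial (Fin 3) ℂ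

def Xv : R3 := X 0
def Yv : R3 := X 1
def Zv : R3 := X 2

/-- The 1-form Ω (coefficients of dx, dy, dz). -/
def Om : Fin 3 → R3 :=
  ![Zv * (Yv - Zv) * (Zv ^ 2 + Yv ^ 2 + Yv * Zv) * Yv,
    -(Zv * (Xv - Zv) * (Xv ^ 2 + Zv * Xv + Zv ^ 2) * Xv),
    Xv * Yv * (Xv - Yv) * (Xv ^ 2 + Xv * Yv + Yv ^ 2)]

/-- The 1-form Ξ (coefficients of dx, dy, dz). -/
def Xi : Fin 3 → R3 :=
  ![-((Yv - Zv) * (Zv ^ 2 + Yv ^ 2 + Yv * Zv) * Xv ^ 2),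
    (Xv - Zv) * (Xv ^ 2 + Zv * Xv + Zv ^ 2) * Yv ^ 2,
    -(Zv ^ 2 * (Xv - Yv) * (Xv ^ 2 + Xv * Yv + Yv ^ 2))]

/-- The coefficients of `ω ∧ η` all vanish. -/
def WedgeZero (ω η : Fin 3 → R3) : Prop :=
  ∀ i j : Fin 3, ω i * η j - ω j * η i = 0

/-- The 1-form `G·dF − F·dG`. -/
def pencilForm (F G : R3) : Fin 3 → R3 :=
  fun i => G * pderiv i F - F * pderiv i G

def Fpol : R3 := (Yv ^ 3 - Zv ^ 3) * (Xv ^ 2 - Yv * Zv) ^ 3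

def Gpol : R3 := (Xv ^ 3 - Zv ^ 3) * (-Yv ^ 2 + Zv * Xv) ^ 3

lemma dF0 : pderiv 0 Fpol = (Yv ^ 3 - Zv ^ 3) * (6 * Xv * (Xv ^ 2 - Yv * Zv) ^ 2) := by
  simp only [Fpol, Xv, Yv, Zv, pderiv_mul, pderiv_pow, map_sub, pderiv_X, Pi.single_eq_same,
    Pi.single_eq_of_ne (by decide : (1:Fin 3) ≠ 0), Pi.single_eq_of_ne (by decide : (2:Fin 3) ≠ 0)]
  ring

lemma dG0 : pderiv 0 Gpol = 3 * Xv ^ 2 * (-Yv ^ 2 + Zv * Xv) ^ 3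
    + (Xv ^ 3 - Zv ^ 3) * (3 * Zv * (-Yv ^ 2 + Zv * Xv) ^ 2) := by
  simp only [Gpol, Xv, Yv, Zv, pderiv_mul, pderiv_pow, map_sub, map_add, map_neg, pderiv_X,
    Pi.single_eq_same,
    Pi.single_eq_of_ne (by decide : (1:Fin 3) ≠ 0), Pi.single_eq_of_ne (by decide : (2:Fin 3) ≠ 0)]
  ring

lemma dF1 : pderiv 1 Fpol = 3 * Yv ^ 2 * (Xv ^ 2 - Yv * Zv) ^ 3
    + (Yv ^ 3 - Zv ^ 3) * (-3 * Zv * (Xv ^ 2 - Yv * Zv) ^ 2) := by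
  simp only [Fpol, Xv, Yv, Zv, pderiv_mul, pderiv_pow, map_sub, pderiv_X, Pi.single_eq_same,
    Pi.single_eq_of_ne (by decide : (0:Fin 3) ≠ 1), Pi.single_eq_of_ne (by decide : (2:Fin 3) ≠ 1)]
  ring

lemma dG1 : pderiv 1 Gpol = (Xv ^ 3 - Zv ^ 3) * (-6 * Yv * (-Yv ^ 2 + Zv * Xv) ^ 2) := by
  simp only [Gpol, Xv, Yv, Zv, pderiv_mul, pderiv_pow, map_sub, map_add, map_neg, pderiv_X,
    Pi.single_eq_same,
    Pi.single_eq_of_ne (by decide : (0:Fin 3) ≠ 1), Pi.single_eq_of_ne (by decide : (2:Fin 3) ≠ 1)]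
  ring

lemma dF2 : pderiv 2 Fpol = -3 * Zv ^ 2 * (Xv ^ 2 - Yv * Zv) ^ 3
    + (Yv ^ 3 - Zv ^ 3) * (-3 * Yv * (Xv ^ 2 - Yv * Zv) ^ 2) := by
  simp only [Fpol, Xv, Yv, Zv, pderiv_mul, pderiv_pow, map_sub, pderiv_X, Pi.single_eq_same,
    Pi.single_eq_of_ne (by decide : (0:Fin 3) ≠ 2), Pi.single_eq_of_ne (by decide : (1:Fin 3) ≠ 2)]
  ring

lemma dG2 : pderiv 2 Gpol = -3 * Zv ^ 2 * (-Yv ^ 2 + Zv * Xv) ^ 3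
    + (Xv ^ 3 - Zv ^ 3) * (3 * Xv * (-Yv ^ 2 + Zv * Xv) ^ 2) := by
  simp only [Gpol, Xv, Yv, Zv, pderiv_mul, pderiv_pow, map_sub, map_add, map_neg, pderiv_X,
    Pi.single_eq_same,
    Pi.single_eq_of_ne (by decide : (0:Fin 3) ≠ 2), Pi.single_eq_of_ne (by decide : (1:Fin 3) ≠ 2)]
  ring


lemma pF0 : pencilForm Fpol Gpol 0 = Gpol * ((Yv ^ 3 - Zv ^ 3) * (6 * Xv * (Xv ^ 2 - Yv * Zv) ^ 2))
    - Fpol * (3 * Xv ^ 2 * (-Yv ^ 2 + Zv * Xv) ^ 3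
      + (Xv ^ 3 - Zv ^ 3) * (3 * Zv * (-Yv ^ 2 + Zv * Xv) ^ 2)) := by
  show Gpol * pderiv 0 Fpol - Fpol * pderiv 0 Gpol = _
  rw [dF0, dG0]

lemma pF1 : pencilForm Fpol Gpol 1 = Gpol * (3 * Yv ^ 2 * (Xv ^ 2 - Yv * Zv) ^ 3
      + (Yv ^ 3 - Zv ^ 3) * (-3 * Zv * (Xv ^ 2 - Yv * Zv) ^ 2))
    - Fpol * ((Xv ^ 3 - Zv ^ 3) * (-6 * Yv * (-Yv ^ 2 + Zv * Xv) ^ 2)) := by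
  show Gpol * pderiv 1 Fpol - Fpol * pderiv 1 Gpol = _
  rw [dF1, dG1]

lemma pF2 : pencilForm Fpol Gpol 2 = Gpol * (-3 * Zv ^ 2 * (Xv ^ 2 - Yv * Zv) ^ 3
      + (Yv ^ 3 - Zv ^ 3) * (-3 * Yv * (Xv ^ 2 - Yv * Zv) ^ 2))
    - Fpol * (-3 * Zv ^ 2 * (-Yv ^ 2 + Zv * Xv) ^ 3
      + (Xv ^ 3 - Zv ^ 3) * (3 * Xv * (-Yv ^ 2 + Zv * Xv) ^ 2)) := by
  show Gpol * pderiv 2 Fpol - Fpol * pderiv 2 Gpol = _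
  rw [dF2, dG2]

set_option maxHeartbeats 4000000 in
theorem stmt_14 : WedgeZero (fun i => Om i - Xi i) (pencilForm Fpol Gpol) := by
  intro i j
  fin_cases i <;> fin_cases j
  · exact sub_self _
  · show (Om 0 - Xi 0) * pencilForm Fpol Gpol 1 - (Om 1 - Xi 1) * pencilForm Fpol Gpol 0 = 0
    rw [pF0, pF1]
    simp only [Om, Xi, Matrix.cons_val_zero, Matrix.cons_val_one, Matrix.head_cons,
      Matrix.cons_val_two, Matrix.tail_cons]
    rw [Fpol, Gpol]
    ring
  · show (Om 0 - Xi 0) * pencilForm Fpol Gpol 2 - (Om 2 - Xi 2) * pencilForm Fpol Gpol 0 = 0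
    rw [pF0, pF2]
    simp only [Om, Xi, Matrix.cons_val_zero, Matrix.cons_val_one, Matrix.head_cons,
      Matrix.cons_val_two, Matrix.tail_cons]
    rw [Fpol, Gpol]
    ring
  · show (Om 1 - Xi 1) * pencilForm Fpol Gpol 0 - (Om 0 - Xi 0) * pencilForm Fpol Gpol 1 = 0
    rw [pF1, pF0]
    simp only [Om, Xi, Matrix.cons_val_zero, Matrix.cons_val_one, Matrix.head_cons,
      Matrix.cons_val_two, Matrix.tail_cons]
    rw [Fpol, Gpol]
    ring
  · exact sub_self _
  · show (Om 1 - Xi 1) * pencilForm Fpol Gpol 2 - (Om 2 - Xi 2) * pencilForm Fpol Gpol 1 = 0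
    rw [pF1, pF2]
    simp only [Om, Xi, Matrix.cons_val_zero, Matrix.cons_val_one, Matrix.head_cons,
      Matrix.cons_val_two, Matrix.tail_cons]
    rw [Fpol, Gpol]
    ring
  · show (Om 2 - Xi 2) * pencilForm Fpol Gpol 0 - (Om 0 - Xi 0) * pencilForm Fpol Gpol 2 = 0
    rw [pF2, pF0]
    simp only [Om, Xi, Matrix.cons_val_zero, Matrix.cons_val_one, Matrix.head_cons,
      Matrix.cons_val_two, Matrix.tail_cons]
    rw [Fpol, Gpol]
    ring
  · show (Om 2 - Xi 2) * pencilForm Fpol Gpol 1 - (Om 1 - Xi 1) * pencilForm Fpol Gpol 2 = 0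
    rw [pF2, pF1]
    simp only [Om, Xi, Matrix.cons_val_zero, Matrix.cons_val_one, Matrix.head_cons,
      Matrix.cons_val_two, Matrix.tail_cons]
    rw [Fpol, Gpol]
    ring
  · exact sub_self _
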